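/- Let A = (ℓ_{ij}) ∈ SL(2,ℤ) with tr A > 2, let k ∈ ℤ², and let φ be an automorphism of Π₁(k). Then there exist n₁, n₂, p, x ∈ ℤ² and ε ∈ {1, −1} such that φ(a₁) = a^{n₁}, φ(a₂) = a^{n₂}, φ(t) = a^p t^ε and φ(β) = a^x β, and these data satisfy: [φ] := (n₁ | n₂) ∈ GL(2,ℤ); A^ε [φ] = [φ] A; 2p = (I − A)x + (I − [φ])k when ε = 1, and 2p = (I − A⁻¹)x − (A⁻¹ + [φ])k when ε = −1. In particular, the subgroup of Π₁(k) generated by a₁, a₂, t is a characteristic subgroup. -/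

import Mathlib

/-- Two elements `x, y` of a group `G` are `φ`-twisted conjugate if
`y = g * x * (φ g)⁻¹` for some `g : G`. -/
def twistedConj {G : Type*} [Group G] (φ : G →* G) (x y : G) : Prop :=
  ∃ g : G, y = g * x * (φ g)⁻¹

/-- The Reidemeister number of `φ` : the cardinality of the set of
`φ`-twisted conjugacy classes. -/
noncomputable def reidemeisterNumber {G : Type*} [Group G] (φ : G →* G) : Cardinal :=
  Cardinal.mk (Quot (twistedConj φ))

/-- Generators of the crystallographic group `Π₁(k)`. -/
inductive Gen1 | a1 | a2 | t | b

open FreeGroup in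
/-- The relators of the presentation of `Π₁(k)`:
`[a₁,a₂] = 1`, `t aᵢ t⁻¹ = A(aᵢ)`, `β aᵢ β⁻¹ = aᵢ⁻¹`, `β² = 1`, `β t β⁻¹ = aᵏ t`. -/
def relsPi1 (A : Matrix (Fin 2) (Fin 2) ℤ) (k : Fin 2 → ℤ) : Set (FreeGroup Gen1) :=
  { of Gen1.a1 * of Gen1.a2 * (of Gen1.a2 * of Gen1.a1)⁻¹,
    of Gen1.t * of Gen1.a1 * (of Gen1.t)⁻¹ * (of Gen1.a1 ^ A 0 0 * of Gen1.a2 ^ A 1 0)⁻¹,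
    of Gen1.t * of Gen1.a2 * (of Gen1.t)⁻¹ * (of Gen1.a1 ^ A 0 1 * of Gen1.a2 ^ A 1 1)⁻¹,
    of Gen1.b * of Gen1.a1 * (of Gen1.b)⁻¹ * of Gen1.a1,
    of Gen1.b * of Gen1.a2 * (of Gen1.b)⁻¹ * of Gen1.a2,
    of Gen1.b * of Gen1.b,
    of Gen1.b * of Gen1.t * (of Gen1.b)⁻¹ * (of Gen1.a1 ^ k 0 * of Gen1.a2 ^ k 1 * of Gen1.t)⁻¹ }

/-- The crystallographic group `Π₁(k)` of `Sol`. -/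
abbrev Pi1 (A : Matrix (Fin 2) (Fin 2) ℤ) (k : Fin 2 → ℤ) := PresentedGroup (relsPi1 A k)

/-- `a^n = a₁^{n 0} * a₂^{n 1}` in `Π₁(k)`. -/
def aP (A : Matrix (Fin 2) (Fin 2) ℤ) (k : Fin 2 → ℤ) (n : Fin 2 → ℤ) : Pi1 A k :=
  (PresentedGroup.of Gen1.a1) ^ n 0 * (PresentedGroup.of Gen1.a2) ^ n 1

/-- The `2 × 2` integer matrix with columns `n₁` and `n₂`. -/
def colMat (n₁ n₂ : Fin 2 → ℤ) : Matrix (Fin 2) (Fin 2) ℤ :=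
  Matrix.of ![![n₁ 0, n₂ 0], ![n₁ 1, n₂ 1]]


/-!
`Π₁(k)` acts on `ℤ²` by affine maps: `a^v` is the translation by `2v`, `t` is `x ↦ A x - k` and
`β` is `x ↦ -x`. This shows that `v ↦ a^v` is injective, and the linear part `L : Π₁(k) → GL(2, ℤ)`
of the action describes conjugation on the translations: `g a^v g⁻¹ = a^(L(g) v)`. Every element is
`a^p t^m` or `a^p t^m β`, with linear part `A^m` or `-A^m`, and since `tr A > 2` the traces
`tr(A^m)` grow strictly with `|m|`.

If `g` commutes with all its conjugates `a^u g a^(-u) = a^((1 - L g) u) g`, then `(1 - L g)² = 0`,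
so `0 = det(1 - L g) = 2 - tr(L g)`, which on normal forms forces `g` to be a translation. The
translations `a^v` have this property, hence an automorphism `φ` maps them to translations, through
a matrix `M = [φ]`. Then `L(φ g) M = M L(g)`, so `φ` preserves the trace of the linear part, and
comparing traces on normal forms gives `φ(β) = a^x β` and `φ(t) = a^p t^(±1)`. Applying `φ` to
`β t β⁻¹ = a^k t` yields the formula for `2p`.
-/

open scoped Matrix
open Multiplicative SemidirectProduct

namespace Matrix

section

variable {n R : Type*} [Fintype n] [DecidableEq n] [CommRing R]

theorem det_zpow_eq_one {A : Matrix n n R} (hdet : A.det = 1) (m : ℤ) : (A ^ m).det = 1 := by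
  obtain ⟨n, rfl | rfl⟩ := Int.eq_nat_or_neg m <;> simp [det_nonsing_inv, hdet]

theorem trace_eq_of_mul_eq_mul [IsDomain R] {L M X : Matrix n n R} (hM : M.det ≠ 0)
    (h : L * M = M * X) : L.trace = X.trace := by
  refine mul_left_cancel₀ hM ?_
  calc M.det * L.trace = (L * (M * M.adjugate)).trace := by
        rw [mul_adjugate, mul_smul_comm, mul_one, trace_smul, smul_eq_mul]
    _ = (M * (X * M.adjugate)).trace := by rw [← Matrix.mul_assoc, h, Matrix.mul_assoc]
    _ = (X * (M.adjugate * M)).trace := by rw [trace_mul_comm, Matrix.mul_assoc]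
    _ = M.det * X.trace := by rw [adjugate_mul, mul_smul_comm, mul_one, trace_smul, smul_eq_mul]

theorem trace_one_fin_two : (1 : Matrix (Fin 2) (Fin 2) R).trace = 2 := by simp

theorem det_one_sub_fin_two (B : Matrix (Fin 2) (Fin 2) R) :
    (1 - B).det = 1 - B.trace + B.det := by
  rw [det_fin_two, det_fin_two, trace_fin_two]
  simp only [sub_apply, one_apply_eq, one_apply_ne, ne_eq, zero_ne_one, one_ne_zero,
    not_false_eq_true]
  ring

end

variable {A : Matrix (Fin 2) (Fin 2) ℤ}

theorem add_inv_fin_two (hdet : A.det = 1) : A + A⁻¹ = A.trace • 1 := by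
  rw [inv_def, hdet, Ring.inverse_one, one_smul, adjugate_fin_two]
  ext i j; fin_cases i <;> fin_cases j <;> simp [trace_fin_two, add_comm]

theorem trace_inv_fin_two (hdet : A.det = 1) : A⁻¹.trace = A.trace := by
  rw [inv_def, hdet, Ring.inverse_one, one_smul, adjugate_fin_two]
  simp [trace_fin_two, add_comm]

theorem trace_pow_add_two (hdet : A.det = 1) (n : ℕ) :
    (A ^ (n + 2)).trace = A.trace * (A ^ (n + 1)).trace - (A ^ n).trace := by
  have key : A ^ (n + 2) + A ^ n = A.trace • A ^ (n + 1) := by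
    calc A ^ (n + 2) + A ^ n = A ^ (n + 1) * (A + A⁻¹) := by
          rw [mul_add, ← pow_succ, pow_succ A n, mul_assoc, mul_nonsing_inv _ (by simp [hdet]),
            mul_one]
      _ = A.trace • A ^ (n + 1) := by rw [add_inv_fin_two hdet, mul_smul_comm, mul_one]
  have := congrArg trace key
  rw [trace_add, trace_smul, smul_eq_mul] at this
  linarith

theorem strictMono_trace_pow (hdet : A.det = 1) (htr : 2 < A.trace) :
    StrictMono fun n : ℕ ↦ (A ^ n).trace := by
  have key (n : ℕ) : 2 ≤ (A ^ n).trace ∧ (A ^ n).trace < (A ^ (n + 1)).trace := by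
    induction n with
    | zero => exact ⟨by simp, by simpa using htr⟩
    | succ n ih =>
      rw [trace_pow_add_two hdet]
      constructor <;> nlinarith
  exact strictMono_nat_of_lt_succ fun n ↦ (key n).2

theorem trace_zpow_eq_trace_pow_natAbs (hdet : A.det = 1) (m : ℤ) :
    (A ^ m).trace = (A ^ m.natAbs).trace := by
  obtain ⟨n, rfl | rfl⟩ := Int.eq_nat_or_neg m
  · simp
  · rw [zpow_neg_natCast, trace_inv_fin_two (by simp [hdet])]; simp

theorem trace_zpow_eq_trace_pow_iff (hdet : A.det = 1) (htr : 2 < A.trace) (m : ℤ) (n : ℕ) :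
    (A ^ m).trace = (A ^ n).trace ↔ m.natAbs = n := by
  rw [trace_zpow_eq_trace_pow_natAbs hdet, (strictMono_trace_pow hdet htr).injective.eq_iff]

theorem two_le_trace_zpow (hdet : A.det = 1) (htr : 2 < A.trace) (m : ℤ) :
    2 ≤ (A ^ m).trace := by
  rw [trace_zpow_eq_trace_pow_natAbs hdet]
  simpa [trace_fin_two] using (strictMono_trace_pow hdet htr).monotone (Nat.zero_le m.natAbs)

theorem det_one_sub_zpow (hdet : A.det = 1) (m : ℤ) : (1 - A ^ m).det = 2 - (A ^ m).trace := by
  rw [det_one_sub_fin_two, det_zpow_eq_one hdet]; ring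

theorem det_one_sub_neg_zpow (hdet : A.det = 1) (m : ℤ) :
    (1 - -A ^ m).det = 2 + (A ^ m).trace := by
  rw [det_one_sub_fin_two, det_neg, det_zpow_eq_one hdet, trace_neg, Fintype.card_fin]; ring

end Matrix

namespace Matrix.GeneralLinearGroup

variable {n R : Type*} [Fintype n] [DecidableEq n] [CommRing R]

def mulVecAut : GL n R →* MulAut (Multiplicative (n → R)) where
  toFun g :=
    { toFun w := ofAdd ((g : Matrix n n R) *ᵥ w.toAdd)
      invFun w := ofAdd ((↑g⁻¹ : Matrix n n R) *ᵥ w.toAdd)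
      left_inv w := by simp [mulVec_mulVec]
      right_inv w := by simp [mulVec_mulVec]
      map_mul' v w := by simp [mulVec_add] }
  map_one' := by ext; simp
  map_mul' g h := by ext; simp [mulVec_mulVec]

end Matrix.GeneralLinearGroup

abbrev AffineGroupZ2 :=
  Multiplicative (Fin 2 → ℤ) ⋊[Matrix.GeneralLinearGroup.mulVecAut] GL (Fin 2) ℤ

namespace AffineGroupZ2

def transl (v : Fin 2 → ℤ) : AffineGroupZ2 := inl (ofAdd v)

theorem transl_mul_transl (v w : Fin 2 → ℤ) : transl v * transl w = transl (v + w) := by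
  rw [transl, transl, ← map_mul]; rfl

theorem transl_zpow (v : Fin 2 → ℤ) (n : ℤ) : transl v ^ n = transl (n • v) := by
  rw [transl, ← map_zpow]; rfl

theorem transl_inv (v : Fin 2 → ℤ) : (transl v)⁻¹ = transl (-v) := by
  rw [transl, ← map_inv]; rfl

theorem transl_single_zpow_mul_transl_single_zpow (c a b : ℤ) :
    transl (Pi.single 0 c) ^ a * transl (Pi.single 1 c) ^ b = transl (c • ![a, b]) := by
  rw [transl_zpow, transl_zpow, transl_mul_transl]
  congr 1; ext j; fin_cases j <;> simp [mul_comm]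

theorem inr_mul_transl_mul_inr_inv (g : GL (Fin 2) ℤ) (v : Fin 2 → ℤ) :
    inr g * transl v * (inr g)⁻¹ = transl ((g : Matrix (Fin 2) (Fin 2) ℤ) *ᵥ v) := by
  rw [transl, ← map_inv, ← inl_aut]; rfl

theorem conj_transl (s : Fin 2 → ℤ) (g : GL (Fin 2) ℤ) (v : Fin 2 → ℤ) :
    transl s * inr g * transl v * (transl s * inr g)⁻¹ =
      transl ((g : Matrix (Fin 2) (Fin 2) ℤ) *ᵥ v) := by
  calc _ = transl s * (inr g * transl v * (inr g)⁻¹) * (transl s)⁻¹ := by group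
    _ = _ := by rw [inr_mul_transl_mul_inr_inv, transl_inv, transl_mul_transl, transl_mul_transl,
      add_neg_cancel_comm]

theorem conj_transl_single (s : Fin 2 → ℤ) (g : GL (Fin 2) ℤ) (c : ℤ) (i : Fin 2) :
    transl s * inr g * transl (Pi.single i c) * (transl s * inr g)⁻¹ =
      transl (Pi.single 0 c) ^ g 0 i * transl (Pi.single 1 c) ^ g 1 i := by
  rw [conj_transl, transl_single_zpow_mul_transl_single_zpow]
  congr 1; ext j; fin_cases i <;> fin_cases j <;> simp [Matrix.mulVec_single, mul_comm]

theorem inr_neg_one_mul_transl_mul_inv (v : Fin 2 → ℤ) :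
    inr (-1) * transl v * (inr (-1))⁻¹ = (transl v)⁻¹ := by
  rw [inr_mul_transl_mul_inr_inv, transl_inv, Units.val_neg, Units.val_one, Matrix.neg_mulVec,
    Matrix.one_mulVec]

end AffineGroupZ2

local notation "𝐚₁" => PresentedGroup.of Gen1.a1
local notation "𝐚₂" => PresentedGroup.of Gen1.a2
local notation "𝐭" => PresentedGroup.of Gen1.t
local notation "𝛃" => PresentedGroup.of Gen1.b

namespace Pi1

variable {A : Matrix (Fin 2) (Fin 2) ℤ} {k : Fin 2 → ℤ}

theorem commute_a₁_a₂ : Commute (𝐚₁ : Pi1 A k) 𝐚₂ :=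
  PresentedGroup.mk_eq_mk_of_mul_inv_mem (by simp [relsPi1])

theorem t_mul_a₁_mul_inv : (𝐭 * 𝐚₁ * 𝐭⁻¹ : Pi1 A k) = 𝐚₁ ^ A 0 0 * 𝐚₂ ^ A 1 0 :=
  PresentedGroup.mk_eq_mk_of_mul_inv_mem (by simp [relsPi1])

theorem t_mul_a₂_mul_inv : (𝐭 * 𝐚₂ * 𝐭⁻¹ : Pi1 A k) = 𝐚₁ ^ A 0 1 * 𝐚₂ ^ A 1 1 :=
  PresentedGroup.mk_eq_mk_of_mul_inv_mem (by simp [relsPi1])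

theorem β_mul_a₁_mul_inv : (𝛃 * 𝐚₁ * 𝛃⁻¹ : Pi1 A k) = 𝐚₁⁻¹ :=
  PresentedGroup.mk_eq_mk_of_mul_inv_mem (by simp [relsPi1])

theorem β_mul_a₂_mul_inv : (𝛃 * 𝐚₂ * 𝛃⁻¹ : Pi1 A k) = 𝐚₂⁻¹ :=
  PresentedGroup.mk_eq_mk_of_mul_inv_mem (by simp [relsPi1])

theorem β_mul_β : (𝛃 * 𝛃 : Pi1 A k) = 1 :=
  PresentedGroup.one_of_mem (by simp [relsPi1])

theorem β_mul_t_mul_inv : (𝛃 * 𝐭 * 𝛃⁻¹ : Pi1 A k) = aP A k k * 𝐭 :=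
  PresentedGroup.mk_eq_mk_of_mul_inv_mem (by simp [relsPi1])

theorem β_inv : (𝛃⁻¹ : Pi1 A k) = 𝛃 := inv_eq_of_mul_eq_one_right β_mul_β

theorem β_mul_t : (𝛃 * 𝐭 : Pi1 A k) = aP A k k * 𝐭 * 𝛃 := by
  rw [← β_mul_t_mul_inv, inv_mul_cancel_right]

section Lift

variable {G : Type*} [Group G]

variable (A k) in
def lift (x₁ x₂ y z : G) (h₁ : Commute x₁ x₂)
    (h₂ : y * x₁ * y⁻¹ = x₁ ^ A 0 0 * x₂ ^ A 1 0) (h₃ : y * x₂ * y⁻¹ = x₁ ^ A 0 1 * x₂ ^ A 1 1)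
    (h₄ : z * x₁ * z⁻¹ = x₁⁻¹) (h₅ : z * x₂ * z⁻¹ = x₂⁻¹) (h₆ : z * z = 1)
    (h₇ : z * y * z⁻¹ = x₁ ^ k 0 * x₂ ^ k 1 * y) : Pi1 A k →* G :=
  PresentedGroup.toGroup (f := fun | .a1 => x₁ | .a2 => x₂ | .t => y | .b => z) <| by
    simp only [relsPi1, Set.mem_insert_iff, Set.mem_singleton_iff]
    rintro r (rfl | rfl | rfl | rfl | rfl | rfl | rfl) <;>
      simp only [map_mul, map_inv, map_zpow, FreeGroup.lift_apply_of]
    exacts [mul_inv_eq_one.2 h₁, mul_inv_eq_one.2 h₂, mul_inv_eq_one.2 h₃,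
      mul_eq_one_iff_eq_inv.2 h₄, mul_eq_one_iff_eq_inv.2 h₅, h₆, mul_inv_eq_one.2 h₇]

end Lift

variable (A k) in
def aHom : Multiplicative (Fin 2 → ℤ) →* Pi1 A k where
  toFun w := aP A k w.toAdd
  map_one' := by simp [aP]
  map_mul' v w := by
    have h := (commute_a₁_a₂ (A := A) (k := k)).symm.zpow_zpow (v.toAdd 1) (w.toAdd 0)
    calc _ = 𝐚₁ ^ v.toAdd 0 * (𝐚₁ ^ w.toAdd 0 * 𝐚₂ ^ v.toAdd 1) * 𝐚₂ ^ w.toAdd 1 := by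
          simp only [aP, toAdd_mul, Pi.add_apply, zpow_add]; group
      _ = _ := by rw [← h.eq]; simp only [aP]; group

theorem aP_add (v w : Fin 2 → ℤ) : aP A k (v + w) = aP A k v * aP A k w :=
  map_mul (aHom A k) (ofAdd v) (ofAdd w)

theorem aP_zsmul (n : ℤ) (v : Fin 2 → ℤ) : aP A k (n • v) = aP A k v ^ n :=
  map_zpow (aHom A k) (ofAdd v) n

theorem aP_neg (v : Fin 2 → ℤ) : aP A k (-v) = (aP A k v)⁻¹ :=
  map_inv (aHom A k) (ofAdd v)

theorem aP_zero : aP A k 0 = 1 := map_one (aHom A k)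

theorem aP_single_zero : aP A k (Pi.single 0 1) = 𝐚₁ := by simp [aP]

theorem aP_single_one : aP A k (Pi.single 1 1) = 𝐚₂ := by simp [aP]

theorem commute_aP (v w : Fin 2 → ℤ) : Commute (aP A k v) (aP A k w) := by
  rw [Commute, SemiconjBy, ← aP_add, ← aP_add, add_comm]

theorem map_aP {f : Pi1 A k →* Pi1 A k} {n₁ n₂ : Fin 2 → ℤ} (h₁ : f 𝐚₁ = aP A k n₁)
    (h₂ : f 𝐚₂ = aP A k n₂) (v : Fin 2 → ℤ) : f (aP A k v) = aP A k (colMat n₁ n₂ *ᵥ v) := by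
  have hv : colMat n₁ n₂ *ᵥ v = v 0 • n₁ + v 1 • n₂ := by
    ext i; fin_cases i <;> simp [colMat, Matrix.mulVec, dotProduct, mul_comm (v _)]
  rw [hv, aP_add, aP_zsmul, aP_zsmul, ← h₁, ← h₂, ← map_zpow, ← map_zpow, ← map_mul]; rfl

theorem colMat_col (B : Matrix (Fin 2) (Fin 2) ℤ) : colMat (fun i ↦ B i 0) (fun i ↦ B i 1) = B := by
  ext i j; fin_cases i <;> fin_cases j <;> rfl

theorem conj_aP_of_conj_a₁_a₂ {g : Pi1 A k} {B : Matrix (Fin 2) (Fin 2) ℤ}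
    (h₁ : g * 𝐚₁ * g⁻¹ = aP A k (fun i ↦ B i 0)) (h₂ : g * 𝐚₂ * g⁻¹ = aP A k (fun i ↦ B i 1))
    (v : Fin 2 → ℤ) : g * aP A k v * g⁻¹ = aP A k (B *ᵥ v) := by
  simpa [colMat_col] using map_aP (f := (MulAut.conj g).toMonoidHom) h₁ h₂ v

open AffineGroupZ2 Matrix.GeneralLinearGroup

variable (k) in
/-- The factor `2` lets `t` act as `x ↦ A x - k`: then `β t β⁻¹ = a^k t` holds over `ℤ`. -/
noncomputable def affineRep (hA : IsUnit A.det) : Pi1 A k →* AffineGroupZ2 :=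
  lift A k (transl (Pi.single 0 2)) (transl (Pi.single 1 2)) (transl (-k) * inr (mk'' A hA))
    (inr (-1)) ((Commute.all _ _).map inl)
    (conj_transl_single _ _ 2 0) (conj_transl_single _ _ 2 1)
    (inr_neg_one_mul_transl_mul_inv _) (inr_neg_one_mul_transl_mul_inv _)
    (by rw [← map_mul, neg_one_mul, neg_neg, map_one])
    (by
      calc _ = (inr (-1) * transl (-k) * (inr (-1))⁻¹) * inr ((-1) * mk'' A hA * (-1)⁻¹) := by
            simp only [map_mul, map_inv]; group
        _ = _ := by
          rw [inr_neg_one_mul_transl_mul_inv, transl_single_zpow_mul_transl_single_zpow,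
            ← mul_assoc, transl_mul_transl, transl_inv]
          congr 2
          · ext j; fin_cases j <;> simp [two_mul]
          · simp)

variable (k) in
noncomputable def linearPart (hA : IsUnit A.det) : Pi1 A k →* GL (Fin 2) ℤ :=
  rightHom.comp (affineRep k hA)

section LinearPart

variable (hA : IsUnit A.det)

theorem affineRep_a₁ : affineRep k hA 𝐚₁ = transl (Pi.single 0 2) := by
  unfold affineRep lift; exact PresentedGroup.toGroup.of _

theorem affineRep_a₂ : affineRep k hA 𝐚₂ = transl (Pi.single 1 2) := by
  unfold affineRep lift; exact PresentedGroup.toGroup.of _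

theorem affineRep_t : affineRep k hA 𝐭 = transl (-k) * inr (mk'' A hA) := by
  unfold affineRep lift; exact PresentedGroup.toGroup.of _

theorem affineRep_β : affineRep k hA 𝛃 = inr (-1) := by
  unfold affineRep lift; exact PresentedGroup.toGroup.of _

theorem affineRep_aP (v : Fin 2 → ℤ) : affineRep k hA (aP A k v) = transl (2 • v) := by
  rw [aP, map_mul, map_zpow, map_zpow, affineRep_a₁, affineRep_a₂,
    transl_single_zpow_mul_transl_single_zpow]
  congr 2; ext i; fin_cases i <;> rfl

include hA in
theorem aP_injective : Function.Injective (aP A k) := by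
  intro v w h
  have := congrArg (fun g ↦ toAdd (affineRep k hA g).left) h
  simp only [affineRep_aP, transl, left_inl, toAdd_ofAdd] at this
  exact smul_right_injective _ two_ne_zero this

theorem linearPart_a₁ : linearPart k hA 𝐚₁ = 1 := by simp [linearPart, affineRep_a₁, transl]

theorem linearPart_a₂ : linearPart k hA 𝐚₂ = 1 := by simp [linearPart, affineRep_a₂, transl]

theorem linearPart_t : (linearPart k hA 𝐭 : Matrix (Fin 2) (Fin 2) ℤ) = A := by
  simp [linearPart, affineRep_t, transl]

theorem linearPart_β : linearPart k hA 𝛃 = -1 := by simp [linearPart, affineRep_β]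

theorem conj_aP (g : Pi1 A k) (v : Fin 2 → ℤ) :
    g * aP A k v * g⁻¹ = aP A k ((linearPart k hA g : Matrix (Fin 2) (Fin 2) ℤ) *ᵥ v) := by
  have hg : g ∈ Subgroup.closure (Set.range PresentedGroup.of) := by simp
  induction hg using Subgroup.closure_induction generalizing v with
  | mem x hx =>
    obtain ⟨i, rfl⟩ := hx
    cases i
    · rw [linearPart_a₁, Units.val_one]
      exact conj_aP_of_conj_a₁_a₂ (by simp [aP]) (by simp [aP, commute_a₁_a₂.eq]) v
    · rw [linearPart_a₂, Units.val_one]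
      exact conj_aP_of_conj_a₁_a₂ (by simp [aP, ← commute_a₁_a₂.eq]) (by simp [aP]) v
    · rw [linearPart_t]
      exact conj_aP_of_conj_a₁_a₂ t_mul_a₁_mul_inv t_mul_a₂_mul_inv v
    · rw [linearPart_β, Units.val_neg, Units.val_one]
      exact conj_aP_of_conj_a₁_a₂ (by simp [aP, β_mul_a₁_mul_inv])
        (by simp [aP, β_mul_a₂_mul_inv]) v
  | one => simp
  | mul x y _ _ hx hy =>
    rw [mul_inv_rev, map_mul, Units.val_mul, ← Matrix.mulVec_mulVec, ← hx, ← hy]; group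
  | inv x _ hx =>
    have := hx ((linearPart k hA x⁻¹ : Matrix (Fin 2) (Fin 2) ℤ) *ᵥ v)
    rw [Matrix.mulVec_mulVec, ← Units.val_mul, ← map_mul, mul_inv_cancel, map_one, Units.val_one,
      Matrix.one_mulVec] at this
    rw [← this]; group

theorem mul_aP (g : Pi1 A k) (v : Fin 2 → ℤ) :
    g * aP A k v = aP A k ((linearPart k hA g : Matrix (Fin 2) (Fin 2) ℤ) *ᵥ v) * g := by
  rw [← conj_aP hA, inv_mul_cancel_right]

theorem linearPart_aP (v : Fin 2 → ℤ) : linearPart k hA (aP A k v) = 1 := by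
  simp [aP, linearPart_a₁, linearPart_a₂]

theorem linearPart_t_zpow (m : ℤ) :
    (linearPart k hA (𝐭 ^ m) : Matrix (Fin 2) (Fin 2) ℤ) = A ^ m := by
  rw [map_zpow, Matrix.coe_units_zpow, linearPart_t]

theorem linearPart_aP_mul_t_zpow (p : Fin 2 → ℤ) (m : ℤ) :
    (linearPart k hA (aP A k p * 𝐭 ^ m) : Matrix (Fin 2) (Fin 2) ℤ) = A ^ m := by
  rw [map_mul, linearPart_aP, one_mul, linearPart_t_zpow]

theorem linearPart_aP_mul_t_zpow_mul_β (p : Fin 2 → ℤ) (m : ℤ) :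
    (linearPart k hA (aP A k p * 𝐭 ^ m * 𝛃) : Matrix (Fin 2) (Fin 2) ℤ) = -A ^ m := by
  rw [map_mul, Units.val_mul, linearPart_aP_mul_t_zpow, linearPart_β]; simp

end LinearPart

theorem β_mul_t_inv (hA : IsUnit A.det) :
    (𝛃 * 𝐭⁻¹ : Pi1 A k) = aP A k (-(A⁻¹ *ᵥ k)) * 𝐭⁻¹ * 𝛃 := by
  have hL : (linearPart k hA 𝐭⁻¹ : Matrix (Fin 2) (Fin 2) ℤ) = A⁻¹ := by
    rw [map_inv, Matrix.coe_units_inv, linearPart_t]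
  calc (𝛃 * 𝐭⁻¹ : Pi1 A k) = (𝛃 * 𝐭 * 𝛃⁻¹)⁻¹ * 𝛃 := by group
    _ = 𝐭⁻¹ * aP A k (-k) * 𝛃 := by rw [β_mul_t_mul_inv, mul_inv_rev, aP_neg]
    _ = _ := by rw [mul_aP hA, hL, Matrix.mulVec_neg]

def HasNormalForm (g : Pi1 A k) : Prop :=
  ∃ (p : Fin 2 → ℤ) (m : ℤ), g = aP A k p * 𝐭 ^ m ∨ g = aP A k p * 𝐭 ^ m * 𝛃

theorem HasNormalForm.mul_aP (hA : IsUnit A.det) {g : Pi1 A k} (hg : HasNormalForm g)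
    (w : Fin 2 → ℤ) : HasNormalForm (g * aP A k w) := by
  obtain ⟨p, m, h⟩ := hg
  refine ⟨(linearPart k hA g : Matrix (Fin 2) (Fin 2) ℤ) *ᵥ w + p, m, ?_⟩
  rw [Pi1.mul_aP hA, aP_add]
  rcases h with rfl | rfl
  · left; group
  · right; group

theorem HasNormalForm.mul_t (hA : IsUnit A.det) {g : Pi1 A k} (hg : HasNormalForm g) :
    HasNormalForm (g * 𝐭) := by
  obtain ⟨p, m, rfl | rfl⟩ := hg
  · exact ⟨p, m + 1, Or.inl (by group)⟩
  · refine ⟨p + A ^ m *ᵥ k, m + 1, Or.inr ?_⟩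
    calc aP A k p * 𝐭 ^ m * 𝛃 * 𝐭 = aP A k p * (𝐭 ^ m * aP A k k) * 𝐭 * 𝛃 := by
          rw [mul_assoc _ 𝛃, β_mul_t]; group
      _ = _ := by rw [Pi1.mul_aP hA (𝐭 ^ m), linearPart_t_zpow, aP_add]; group

theorem HasNormalForm.mul_t_inv (hA : IsUnit A.det) {g : Pi1 A k} (hg : HasNormalForm g) :
    HasNormalForm (g * 𝐭⁻¹) := by
  obtain ⟨p, m, rfl | rfl⟩ := hg
  · exact ⟨p, m - 1, Or.inl (by group)⟩
  · refine ⟨p + A ^ m *ᵥ (-(A⁻¹ *ᵥ k)), m - 1, Or.inr ?_⟩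
    calc aP A k p * 𝐭 ^ m * 𝛃 * 𝐭⁻¹ = aP A k p * (𝐭 ^ m * aP A k (-(A⁻¹ *ᵥ k))) * 𝐭⁻¹ * 𝛃 := by
          rw [mul_assoc _ 𝛃, β_mul_t_inv hA]; group
      _ = _ := by rw [Pi1.mul_aP hA (𝐭 ^ m), linearPart_t_zpow, aP_add]; group

theorem HasNormalForm.mul_β {g : Pi1 A k} (hg : HasNormalForm g) : HasNormalForm (g * 𝛃) := by
  obtain ⟨p, m, rfl | rfl⟩ := hg
  · exact ⟨p, m, Or.inr rfl⟩
  · exact ⟨p, m, Or.inl (by rw [mul_assoc, β_mul_β, mul_one])⟩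

theorem hasNormalForm (hA : IsUnit A.det) (g : Pi1 A k) : HasNormalForm g := by
  have hg : g ∈ Subgroup.closure (Set.range PresentedGroup.of) := by simp
  induction hg using Subgroup.closure_induction_right with
  | one => exact ⟨0, 0, Or.inl (by simp [aP_zero])⟩
  | mul_right x _ y hy ih =>
    obtain ⟨i, rfl⟩ := hy
    cases i
    · exact aP_single_zero (A := A) (k := k) ▸ ih.mul_aP hA _
    · exact aP_single_one (A := A) (k := k) ▸ ih.mul_aP hA _
    · exact ih.mul_t hA
    · exact ih.mul_β
  | mul_inv_cancel x _ y hy ih =>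
    obtain ⟨i, rfl⟩ := hy
    cases i
    · rw [← aP_single_zero, ← aP_neg]; exact ih.mul_aP hA _
    · rw [← aP_single_one, ← aP_neg]; exact ih.mul_aP hA _
    · exact ih.mul_t_inv hA
    · rw [β_inv]; exact ih.mul_β

theorem det_one_sub_linearPart_eq_zero (hA : IsUnit A.det) {g : Pi1 A k}
    (hg : ∀ u, Commute g (aP A k u * g * (aP A k u)⁻¹)) :
    (1 - (linearPart k hA g : Matrix (Fin 2) (Fin 2) ℤ)).det = 0 := by
  set B := (linearPart k hA g : Matrix (Fin 2) (Fin 2) ℤ)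
  have fixed (u : Fin 2 → ℤ) : (1 - B) *ᵥ ((1 - B) *ᵥ u) = 0 := by
    have hconj : aP A k u * g * (aP A k u)⁻¹ = aP A k ((1 - B) *ᵥ u) * g := by
      rw [← aP_neg, mul_assoc, mul_aP hA, ← mul_assoc, ← aP_add, Matrix.sub_mulVec,
        Matrix.one_mulVec, Matrix.mulVec_neg, sub_eq_add_neg]
    have := (hg u).eq
    rw [hconj, ← mul_assoc, mul_aP hA] at this
    have := aP_injective hA (mul_right_cancel (mul_right_cancel this))
    rw [Matrix.sub_mulVec, Matrix.one_mulVec, this, sub_self]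
  by_contra h
  have := Matrix.eq_zero_of_mulVec_eq_zero h
    (Matrix.eq_zero_of_mulVec_eq_zero h (fixed (Pi.single 0 1)))
  simpa using congrFun this 0

theorem linearPart_map_mul {ψ : Pi1 A k →* Pi1 A k} {M : Matrix (Fin 2) (Fin 2) ℤ}
    (hA : IsUnit A.det) (hM : ∀ v, ψ (aP A k v) = aP A k (M *ᵥ v)) (g : Pi1 A k) :
    (linearPart k hA (ψ g) : Matrix (Fin 2) (Fin 2) ℤ) * M = M * linearPart k hA g := by
  refine Matrix.ext_iff_mulVec.2 fun v ↦ aP_injective (k := k) hA ?_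
  rw [← Matrix.mulVec_mulVec, ← Matrix.mulVec_mulVec, ← conj_aP, ← hM, ← hM, ← conj_aP, map_mul,
    map_mul, map_inv]

theorem exists_eq_aP_of_commute_conj (hdet : A.det = 1) (htr : 2 < A.trace) {g : Pi1 A k}
    (hg : ∀ u, Commute g (aP A k u * g * (aP A k u)⁻¹)) : ∃ p, g = aP A k p := by
  have hA : IsUnit A.det := by simp [hdet]
  have h := det_one_sub_linearPart_eq_zero hA hg
  obtain ⟨p, m, rfl | rfl⟩ := hasNormalForm hA g
  · rw [linearPart_aP_mul_t_zpow, Matrix.det_one_sub_zpow hdet] at h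
    have : m.natAbs = 0 :=
      (Matrix.trace_zpow_eq_trace_pow_iff hdet htr m 0).1
        (by rw [pow_zero, Matrix.trace_one_fin_two]; linarith)
    exact ⟨p, by simp [Int.natAbs_eq_zero.1 this]⟩
  · rw [linearPart_aP_mul_t_zpow_mul_β, Matrix.det_one_sub_neg_zpow hdet] at h
    linarith [Matrix.two_le_trace_zpow hdet htr m]

theorem exists_map_aP_eq (hdet : A.det = 1) (htr : 2 < A.trace) (ψ : Pi1 A k ≃* Pi1 A k)
    (v : Fin 2 → ℤ) : ∃ w, ψ (aP A k v) = aP A k w := by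
  have hA : IsUnit A.det := by simp [hdet]
  refine exists_eq_aP_of_commute_conj hdet htr fun u ↦ ?_
  have := (commute_aP (A := A) (k := k) v (linearPart k hA (ψ.symm (aP A k u)) *ᵥ v)).map ψ
  rwa [← conj_aP, map_mul, map_mul, map_inv, ψ.apply_symm_apply] at this

theorem exists_map_aP_eq_colMat (hdet : A.det = 1) (htr : 2 < A.trace)
    (ψ : Pi1 A k ≃* Pi1 A k) : ∃ n₁ n₂, ψ 𝐚₁ = aP A k n₁ ∧ ψ 𝐚₂ = aP A k n₂ ∧
      ∀ v, ψ (aP A k v) = aP A k (colMat n₁ n₂ *ᵥ v) := by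
  obtain ⟨n₁, h₁⟩ := exists_map_aP_eq hdet htr ψ (Pi.single 0 1)
  obtain ⟨n₂, h₂⟩ := exists_map_aP_eq hdet htr ψ (Pi.single 1 1)
  rw [aP_single_zero] at h₁
  rw [aP_single_one] at h₂
  exact ⟨n₁, n₂, h₁, h₂, map_aP (f := ψ.toMonoidHom) h₁ h₂⟩

theorem isUnit_det_of_map_aP (hdet : A.det = 1) (htr : 2 < A.trace) (ψ : Pi1 A k ≃* Pi1 A k)
    {M : Matrix (Fin 2) (Fin 2) ℤ} (hM : ∀ v, ψ (aP A k v) = aP A k (M *ᵥ v)) : IsUnit M.det := by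
  have hA : IsUnit A.det := by simp [hdet]
  obtain ⟨n₁, n₂, -, -, hM'⟩ := exists_map_aP_eq_colMat hdet htr ψ.symm
  have hinv : colMat n₁ n₂ * M = 1 := Matrix.ext_iff_mulVec.2 fun v ↦ aP_injective (k := k) hA <| by
    rw [← Matrix.mulVec_mulVec, ← hM', ← hM, Matrix.one_mulVec]; exact ψ.symm_apply_apply _
  exact IsUnit.of_mul_eq_one_right _ (by rw [← Matrix.det_mul, hinv, Matrix.det_one])

theorem exists_map_β_eq (hdet : A.det = 1) (htr : 2 < A.trace) (ψ : Pi1 A k ≃* Pi1 A k)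
    {M : Matrix (Fin 2) (Fin 2) ℤ} (hM : ∀ v, ψ (aP A k v) = aP A k (M *ᵥ v)) :
    ∃ x, ψ 𝛃 = aP A k x * 𝛃 := by
  have hA : IsUnit A.det := by simp [hdet]
  have htrace := Matrix.trace_eq_of_mul_eq_mul (isUnit_det_of_map_aP hdet htr ψ hM).ne_zero
    (linearPart_map_mul (ψ := ψ.toMonoidHom) hA hM 𝛃)
  rw [linearPart_β, Units.val_neg, Units.val_one, Matrix.trace_neg, Matrix.trace_one_fin_two]
    at htrace
  obtain ⟨x, m, h | h⟩ := hasNormalForm hA (ψ 𝛃) <;> rw [MulEquiv.coe_toMonoidHom, h] at htrace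
  · rw [linearPart_aP_mul_t_zpow] at htrace
    have := Matrix.two_le_trace_zpow hdet htr m
    linarith
  · rw [linearPart_aP_mul_t_zpow_mul_β, Matrix.trace_neg, neg_inj] at htrace
    have : m.natAbs = 0 :=
      (Matrix.trace_zpow_eq_trace_pow_iff hdet htr m 0).1
        (by rw [pow_zero, Matrix.trace_one_fin_two]; linarith)
    exact ⟨x, by simp [h, Int.natAbs_eq_zero.1 this]⟩

theorem exists_map_t_eq (hdet : A.det = 1) (htr : 2 < A.trace) (ψ : Pi1 A k ≃* Pi1 A k)
    {M : Matrix (Fin 2) (Fin 2) ℤ} (hM : ∀ v, ψ (aP A k v) = aP A k (M *ᵥ v)) :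
    ∃ (p : Fin 2 → ℤ) (ε : ℤ), (ε = 1 ∨ ε = -1) ∧ ψ 𝐭 = aP A k p * 𝐭 ^ ε ∧ A ^ ε * M = M * A := by
  have hA : IsUnit A.det := by simp [hdet]
  have hL := linearPart_map_mul (ψ := ψ.toMonoidHom) hA hM 𝐭
  have htrace := Matrix.trace_eq_of_mul_eq_mul (isUnit_det_of_map_aP hdet htr ψ hM).ne_zero hL
  rw [linearPart_t] at hL htrace
  obtain ⟨p, m, h | h⟩ := hasNormalForm hA (ψ 𝐭) <;>
    rw [MulEquiv.coe_toMonoidHom, h] at hL htrace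
  · rw [linearPart_aP_mul_t_zpow] at hL htrace
    have : m.natAbs = 1 :=
      (Matrix.trace_zpow_eq_trace_pow_iff hdet htr m 1).1 (by simpa using htrace)
    exact ⟨p, m, by omega, h, hL⟩
  · rw [linearPart_aP_mul_t_zpow_mul_β, Matrix.trace_neg] at htrace
    linarith [Matrix.two_le_trace_zpow hdet htr m]

theorem two_smul_eq_of_map {ψ : Pi1 A k →* Pi1 A k} {M : Matrix (Fin 2) (Fin 2) ℤ}
    (hA : IsUnit A.det) (hM : ∀ v, ψ (aP A k v) = aP A k (M *ᵥ v)) {x p c : Fin 2 → ℤ} {m : ℤ}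
    (hc : 𝛃 * 𝐭 ^ m * 𝛃⁻¹ = aP A k c * 𝐭 ^ m) (hβ : ψ 𝛃 = aP A k x * 𝛃)
    (ht : ψ 𝐭 = aP A k p * 𝐭 ^ m) :
    (2 : ℤ) • p = (1 - A ^ m) *ᵥ x + c - M *ᵥ k := by
  have hβp : 𝛃 * aP A k p = aP A k (-p) * 𝛃 := by
    rw [mul_aP hA, linearPart_β, Units.val_neg, Units.val_one, Matrix.neg_mulVec,
      Matrix.one_mulVec]
  have lhs : aP A k x * 𝛃 * (aP A k p * 𝐭 ^ m) * (aP A k x * 𝛃)⁻¹ =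
      aP A k (x + -p + c + A ^ m *ᵥ (-x)) * 𝐭 ^ m := by
    calc _ = aP A k x * (𝛃 * aP A k p) * 𝐭 ^ m * 𝛃⁻¹ * aP A k (-x) := by rw [aP_neg]; group
      _ = aP A k x * aP A k (-p) * (𝛃 * 𝐭 ^ m * 𝛃⁻¹) * aP A k (-x) := by rw [hβp]; group
      _ = aP A k x * aP A k (-p) * aP A k c * (𝐭 ^ m * aP A k (-x)) := by rw [hc]; group
      _ = _ := by rw [mul_aP hA (𝐭 ^ m), linearPart_t_zpow, aP_add, aP_add, aP_add]; group
  have e := congrArg ψ (β_mul_t_mul_inv (A := A) (k := k))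
  rw [map_mul, map_mul, map_inv, map_mul, hβ, ht, hM, lhs, ← mul_assoc, ← aP_add] at e
  have := aP_injective hA (mul_right_cancel e)
  ext i
  have := congrFun this i
  simp only [Pi.add_apply, Pi.neg_apply, Matrix.mulVec_neg] at this
  simp only [Pi.smul_apply, smul_eq_mul, Pi.sub_apply, Pi.add_apply, Matrix.sub_mulVec,
    Matrix.one_mulVec]
  linarith

theorem aP_mem_closure (v : Fin 2 → ℤ) : aP A k v ∈ Subgroup.closure {𝐚₁, 𝐚₂, 𝐭} :=
  mul_mem (zpow_mem (Subgroup.subset_closure (by simp)) _)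
    (zpow_mem (Subgroup.subset_closure (by simp)) _)

theorem closure_a₁_a₂_t_characteristic (hdet : A.det = 1) (htr : 2 < A.trace) :
    (Subgroup.closure {𝐚₁, 𝐚₂, 𝐭} : Subgroup (Pi1 A k)).Characteristic := by
  refine Subgroup.characteristic_iff_map_le.2 fun ψ ↦ ?_
  obtain ⟨n₁, n₂, h₁, h₂, hM⟩ := exists_map_aP_eq_colMat hdet htr ψ
  obtain ⟨p, ε, -, ht, -⟩ := exists_map_t_eq hdet htr ψ hM
  rw [MonoidHom.map_closure, Subgroup.closure_le]
  rintro _ ⟨g, hg, rfl⟩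
  rcases hg with rfl | rfl | rfl
  · exact h₁ ▸ aP_mem_closure n₁
  · exact h₂ ▸ aP_mem_closure n₂
  · exact ht ▸ mul_mem (aP_mem_closure p) (zpow_mem (Subgroup.subset_closure (by simp)) ε)

end Pi1

/-- Lemma on automorphisms of `Π₁(k)`. -/
theorem stmt3 (A : Matrix (Fin 2) (Fin 2) ℤ) (hdet : A.det = 1) (htr : 2 < A.trace)
    (k : Fin 2 → ℤ) (φ : Pi1 A k ≃* Pi1 A k) :
    (∃ (n₁ n₂ p x : Fin 2 → ℤ) (ε : ℤ),
      (ε = 1 ∨ ε = -1) ∧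
      φ (PresentedGroup.of Gen1.a1) = aP A k n₁ ∧
      φ (PresentedGroup.of Gen1.a2) = aP A k n₂ ∧
      φ (PresentedGroup.of Gen1.t) = aP A k p * (PresentedGroup.of Gen1.t) ^ ε ∧
      φ (PresentedGroup.of Gen1.b) = aP A k x * PresentedGroup.of Gen1.b ∧
      ((colMat n₁ n₂).det = 1 ∨ (colMat n₁ n₂).det = -1) ∧
      (ε = 1 → A * colMat n₁ n₂ = colMat n₁ n₂ * A ∧
        (2 : ℤ) • p = (1 - A).mulVec x + (1 - colMat n₁ n₂).mulVec k) ∧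
      (ε = -1 → A⁻¹ * colMat n₁ n₂ = colMat n₁ n₂ * A ∧
        (2 : ℤ) • p = (1 - A⁻¹).mulVec x - (A⁻¹ + colMat n₁ n₂).mulVec k)) ∧
    Subgroup.map φ.toMonoidHom
        (Subgroup.closure {PresentedGroup.of Gen1.a1, PresentedGroup.of Gen1.a2,
          PresentedGroup.of Gen1.t})
      = Subgroup.closure {PresentedGroup.of Gen1.a1, PresentedGroup.of Gen1.a2,
          PresentedGroup.of Gen1.t} := by
  have hA : IsUnit A.det := by simp [hdet]
  obtain ⟨n₁, n₂, h₁, h₂, hM⟩ := Pi1.exists_map_aP_eq_colMat hdet htr φ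
  obtain ⟨x, hβ⟩ := Pi1.exists_map_β_eq hdet htr φ hM
  obtain ⟨p, ε, hε, ht, hcomm⟩ := Pi1.exists_map_t_eq hdet htr φ hM
  refine ⟨⟨n₁, n₂, p, x, ε, hε, h₁, h₂, ht, hβ,
    Int.isUnit_iff.1 (Pi1.isUnit_det_of_map_aP hdet htr φ hM), ?_, ?_⟩,
    Subgroup.characteristic_iff_map_eq.1 (Pi1.closure_a₁_a₂_t_characteristic hdet htr) φ⟩
  · rintro rfl
    have hc : (𝛃 * 𝐭 ^ (1 : ℤ) * 𝛃⁻¹ : Pi1 A k) = aP A k k * 𝐭 ^ (1 : ℤ) := by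
      simpa using Pi1.β_mul_t_mul_inv
    refine ⟨by simpa using hcomm, ?_⟩
    rw [Pi1.two_smul_eq_of_map (ψ := φ.toMonoidHom) hA hM hc hβ ht, zpow_one]
    simp only [Matrix.sub_mulVec, Matrix.one_mulVec]
    abel
  · rintro rfl
    have hc : (𝛃 * 𝐭 ^ (-1 : ℤ) * 𝛃⁻¹ : Pi1 A k) = aP A k (-(A⁻¹ *ᵥ k)) * 𝐭 ^ (-1 : ℤ) := by
      rw [zpow_neg_one, Pi1.β_mul_t_inv hA]; group
    refine ⟨by simpa [Matrix.zpow_neg_one] using hcomm, ?_⟩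
    rw [Pi1.two_smul_eq_of_map (ψ := φ.toMonoidHom) hA hM hc hβ ht, Matrix.zpow_neg_one,
      Matrix.add_mulVec]
    abel
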